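/- arXiv:2108.09876 — 9 statements merged into one kernel-verified Lean document; each statement's English description precedes it below -/
import Mathlib

section
/- Two consistent Boolean formulas over the same finite variable set are logically equivalent if and only if they have the same set of boundary rules (b-rules). -/
variable {V : Type*} [Fintype V] [DecidableEq V]

/-- Flip the value of variable `x` in world `ω`. -/
def flipAt (ω : V → Bool) (x : V) : V → Bool := Function.update ω x (!(ω x))

/-- `ω` is an `ℓ`-boundary model of `φ`, where `ℓ` is the literal `(x, ω x)` contained in `ω`;
equivalently, `φ` has the b-rule whose antecedent is `ω` restricted away from `x` and whose
consequent is the literal `(x, ω x)`. -/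
def HasBRule (φ : (V → Bool) → Prop) (ω : V → Bool) (x : V) : Prop :=
  φ ω ∧ ¬ φ (flipAt ω x)

/-- The set of b-rules of `φ`, encoded as pairs `(ω, x)` where the antecedent is `ω` off `x`
and the consequent is the literal `(x, ω x)`. -/
def BRules (φ : (V → Bool) → Prop) : Set ((V → Bool) × V) :=
  {p | HasBRule φ p.1 p.2}

/-- `∀ℓ·φ := (ℓ ∨ φ|¬ℓ) ∧ (φ|ℓ)` for the literal `ℓ = (x, b)`. -/
def forallLit (φ : (V → Bool) → Prop) (x : V) (b : Bool) : (V → Bool) → Prop :=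
  fun ω => (ω x = b ∨ φ (Function.update ω x (!b))) ∧ φ (Function.update ω x b)

/-- `∃ℓ·φ := (φ|ℓ) ∨ (¬ℓ ∧ φ|¬ℓ)` for the literal `ℓ = (x, b)`. -/
def existsLit (φ : (V → Bool) → Prop) (x : V) (b : Bool) : (V → Bool) → Prop :=
  fun ω => φ (Function.update ω x b) ∨ (ω x = !b ∧ φ (Function.update ω x (!b)))

/-- `φ` is independent of the literal `(x, b)`: any model containing the literal stays a
model when that literal is flipped. -/
def IndepLit (φ : (V → Bool) → Prop) (x : V) (b : Bool) : Prop :=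
  ∀ ω : V → Bool, ω x = b → φ ω → φ (Function.update ω x (!b))

/-- Successive universal literal quantification `∀ℓ₁,…,ℓₙ·φ`. -/
def forallLits (φ : (V → Bool) → Prop) : List (V × Bool) → ((V → Bool) → Prop)
  | [] => φ
  | p :: L => forallLit (forallLits φ L) p.1 p.2

/- If `φ` and `ψ` have the same b-rules, the worlds where `φ` holds and `ψ` fails are closed under
flipping a single variable: a flip leaving this set would be a boundary model of exactly one of the
two formulas. Since any two worlds are joined by a sequence of flips, this set is either empty or
contains every world, and the latter contradicts the consistency of `ψ`. -/

omit [Fintype V] in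
lemma flipAt_flipAt (ω : V → Bool) (x : V) : flipAt (flipAt ω x) x = ω := by
  funext y
  by_cases h : y = x
  · subst h; simp [flipAt]
  · simp [flipAt, Function.update_of_ne h]

omit [Fintype V] in
lemma update_eq_self_or_flipAt (ω : V → Bool) (x : V) (b : Bool) :
    Function.update ω x b = ω ∨ Function.update ω x b = flipAt ω x := by
  by_cases hb : b = ω x
  · exact .inl (hb ▸ Function.update_eq_self x ω)
  · exact .inr (by rw [Bool.eq_not_of_ne hb]; rfl)

lemma forall_of_flipAt_closed {P : (V → Bool) → Prop} (hP : ∀ ω x, P ω → P (flipAt ω x))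
    {ω : V → Bool} (hω : P ω) (ω' : V → Bool) : P ω' := by
  have hupdate : ∀ ω x b, P ω → P (Function.update ω x b) := fun ω x b h => by
    rcases update_eq_self_or_flipAt ω x b with heq | heq <;> rw [heq]
    exacts [h, hP ω x h]
  have hpiecewise : ∀ s : Finset V, P (s.piecewise ω' ω) := by
    intro s
    induction s using Finset.induction_on with
    | empty => rwa [Finset.piecewise_empty]
    | insert x s _ ih => rw [Finset.piecewise_insert]; exact hupdate _ x _ ih
  simpa only [Finset.piecewise_univ] using hpiecewise Finset.univ

omit [Fintype V] in
lemma flipAt_of_brules_eq {φ ψ : (V → Bool) → Prop} (h : BRules φ = BRules ψ) {ω : V → Bool}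
    (hφ : φ ω) (hψ : ¬ ψ ω) (x : V) : φ (flipAt ω x) ∧ ¬ ψ (flipAt ω x) := by
  have hrule : ∀ ω', HasBRule φ ω' x ↔ HasBRule ψ ω' x := fun ω' => Set.ext_iff.mp h (ω', x)
  constructor
  · by_contra hφ'
    exact hψ ((hrule ω).1 ⟨hφ, hφ'⟩).1
  · intro hψ'
    have hφ' := ((hrule (flipAt ω x)).2 ⟨hψ', by rwa [flipAt_flipAt]⟩).2
    rw [flipAt_flipAt] at hφ'
    exact hφ' hφ

lemma imp_of_brules_eq {φ ψ : (V → Bool) → Prop} (h : BRules φ = BRules ψ)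
    (hψ : ∃ ω, ψ ω) (ω : V → Bool) (hφω : φ ω) : ψ ω := by
  by_contra hψω
  obtain ⟨ω₀, hω₀⟩ := hψ
  have hdisagree := forall_of_flipAt_closed (P := fun ω => φ ω ∧ ¬ ψ ω)
    (fun _ x hω => flipAt_of_brules_eq h hω.1 hω.2 x) ⟨hφω, hψω⟩ ω₀
  exact hdisagree.2 hω₀

/-- Two consistent formulas are equivalent iff they have the same set of b-rules. -/
theorem equiv_iff_brules_eq (φ ψ : (V → Bool) → Prop)
    (hφ : ∃ ω : V → Bool, φ ω) (hψ : ∃ ω : V → Bool, ψ ω) :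
    (∀ ω : V → Bool, φ ω ↔ ψ ω) ↔ BRules φ = BRules ψ :=
  ⟨fun h => congrArg BRules (funext fun ω => propext (h ω)),
    fun h ω => ⟨imp_of_brules_eq h hψ ω, imp_of_brules_eq h.symm hφ ω⟩⟩
end

section
/- For literal ℓ and formula φ, the universal literal quantification ∀ℓ·φ entails φ; moreover, a world ω is a model of φ but not of ∀ℓ·φ if and only if ω is a ¬ℓ-boundary model of φ. -/
variable {V : Type*} [Fintype V] [DecidableEq V]

theorem forallLit_iff_of_eq {α : Type*} [DecidableEq α] {φ : (α → Bool) → Prop}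
    {ω : α → Bool} {x : α} {b : Bool} (h : ω x = b) : forallLit φ x b ω ↔ φ ω := by
  simp only [forallLit, ← h, Function.update_eq_self, true_or, true_and]

theorem forallLit_iff_of_eq_not {α : Type*} [DecidableEq α] {φ : (α → Bool) → Prop}
    {ω : α → Bool} {x : α} {b : Bool} (h : ω x = !b) :
    forallLit φ x b ω ↔ φ ω ∧ φ (Function.update ω x b) := by
  have hb : ω x ≠ b := by simp [h]
  simp only [forallLit, ← h, Function.update_eq_self, hb, false_or]

/-- `∀ℓ·φ` entails `φ`; moreover `ω ⊨ φ` and `ω ⊭ ∀ℓ·φ` iff `ω` is a `¬ℓ`-boundary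
model of `φ` (for `ℓ = (x, b)`). -/
theorem forallLit_semantics (φ : (V → Bool) → Prop) (x : V) (b : Bool) :
    (∀ ω : V → Bool, forallLit φ x b ω → φ ω) ∧
    (∀ ω : V → Bool, (φ ω ∧ ¬ forallLit φ x b ω) ↔
      (ω x = !b ∧ φ ω ∧ ¬ φ (Function.update ω x b))) := by
  constructor
  · intro ω hω
    rcases Bool.eq_or_eq_not (ω x) b with h | h
    · exact (forallLit_iff_of_eq h).1 hω
    · exact ((forallLit_iff_of_eq_not h).1 hω).1
  · intro ω
    rcases Bool.eq_or_eq_not (ω x) b with h | h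
    · simp [forallLit_iff_of_eq h, h]
    · simp only [forallLit_iff_of_eq_not h, h, true_and]
      tauto
end

section
/- Universal quantification of a literal ℓ from a formula φ equals φ conjoined with the negations of the antecedents of all b-rules of φ inferring ¬ℓ: ∀ℓ·φ ≡ φ ∧ ⋀_{(α → ¬ℓ) ∈ R(φ)} ¬α. -/
variable {V : Type*} [Fintype V] [DecidableEq V]

/-!
Writing `ω[x ↦ c]` for `ω` with `x` set to `c`, one has `∀ℓ·φ ≡ φ ∧ (φ|¬ℓ → φ|ℓ)`: whichever of
`ℓ`, `¬ℓ` holds in `ω`, the corresponding restriction of `φ` is just `φ` at `ω`. On the other side,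
the only b-rule inferring `¬ℓ` whose antecedent `ω` satisfies is the one based at `ω[x ↦ ¬ℓ]`, and
that world is a `¬ℓ`-boundary model exactly when `φ|¬ℓ ∧ ¬ φ|ℓ` holds at `ω`.
-/

section

open Function

variable {α : Type*} [DecidableEq α]

theorem flipAt_update (ω : α → Bool) (x : α) (c : Bool) :
    flipAt (update ω x c) x = update ω x (!c) := by
  simp [flipAt]

theorem forallLit_iff (φ : (α → Bool) → Prop) (x : α) (b : Bool) (ω : α → Bool) :
    forallLit φ x b ω ↔ φ ω ∧ (φ (update ω x (!b)) → φ (update ω x b)) := by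
  obtain h | h : ω x = b ∨ ω x = !b := by cases b <;> cases ω x <;> simp
  · have hω : update ω x b = ω := update_eq_self_iff.2 h.symm
    simp only [forallLit, h, hω, true_or, true_and, iff_self_and]
    exact fun hφ _ => hφ
  · have hω : update ω x (!b) = ω := update_eq_self_iff.2 h.symm
    have hne : ω x ≠ b := by simp [h]
    simp only [forallLit, hω, hne, false_or]
    tauto

theorem exists_ne_ne_iff_ne_update {ω ω' : α → Bool} {x : α} {c : Bool} (hx : ω' x = c) :
    (∃ y, y ≠ x ∧ ω y ≠ ω' y) ↔ ω' ≠ update ω x c := by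
  rw [Ne, funext_iff, not_forall]
  refine exists_congr fun y => ?_
  rcases eq_or_ne y x with rfl | hy
  · simp [hx]
  · simp [hy, eq_comm]

theorem forall_hasBRule_exists_ne_iff (φ : (α → Bool) → Prop) (x : α) (c : Bool)
    (ω : α → Bool) :
    (∀ ω' : α → Bool, ω' x = c → HasBRule φ ω' x → ∃ y : α, y ≠ x ∧ ω y ≠ ω' y) ↔
      ¬ HasBRule φ (update ω x c) x := by
  constructor
  · intro h hrule
    obtain ⟨y, hyx, hy⟩ := h _ (update_self x c ω) hrule
    exact hy (update_of_ne hyx c ω).symm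
  · intro h ω' hx hrule
    exact (exists_ne_ne_iff_ne_update hx).2 fun hω' => h (hω' ▸ hrule)

end

/-- `∀ℓ·φ ≡ φ ∧ ⋀_{(α → ¬ℓ) ∈ R(φ)} ¬α` for `ℓ = (x, b)`: a world satisfies `∀ℓ·φ` iff it
satisfies `φ` and, for each b-rule of `φ` inferring `¬ℓ`, it falsifies the antecedent,
i.e. it disagrees with it on some variable other than `x`. -/
theorem forallLit_syntactic (φ : (V → Bool) → Prop) (x : V) (b : Bool) :
    ∀ ω : V → Bool, forallLit φ x b ω ↔
      (φ ω ∧ ∀ ω' : V → Bool, ω' x = !b → HasBRule φ ω' x →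
        ∃ y : V, y ≠ x ∧ ω y ≠ ω' y) := by
  intro ω
  rw [forallLit_iff, forall_hasBRule_exists_ne_iff, HasBRule, flipAt_update, Bool.not_not]
  tauto
end

section
/- Universal variable quantification equals successive universal quantification of both literals of the variable: ∀X·φ ≡ ∀x(∀¬x·φ) ≡ ∀¬x(∀x·φ). -/
variable {V : Type*} [Fintype V] [DecidableEq V]

section

variable {α : Type*} [DecidableEq α]

theorem forallLit_update (φ : (α → Bool) → Prop) (x : α) (b c : Bool) (ω : α → Bool) :
    forallLit φ x b (Function.update ω x c) ↔
      (c = b ∨ φ (Function.update ω x (!b))) ∧ φ (Function.update ω x b) := by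
  simp only [forallLit, Function.update_self, Function.update_idem]

theorem forallLit_forallLit_not (φ : (α → Bool) → Prop) (x : α) (b : Bool) (ω : α → Bool) :
    forallLit (forallLit φ x b) x (!b) ω ↔
      φ (Function.update ω x b) ∧ φ (Function.update ω x (!b)) := by
  change (ω x = !b ∨ forallLit φ x b (Function.update ω x (!!b))) ∧
      forallLit φ x b (Function.update ω x (!b)) ↔ _
  rw [Bool.not_not, forallLit_update, forallLit_update]
  simp only [Bool.not_ne_self, true_or, true_and, false_or]
  exact ⟨fun ⟨_, h⟩ => h.symm, fun h => ⟨Or.inr h.1, h.symm⟩⟩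

end

/-- `∀X·φ ≡ ∀x(∀¬x·φ) ≡ ∀¬x(∀x·φ)`, where `x` is the positive literal of variable `X`. -/
theorem forallVar_eq_forallLits (φ : (V → Bool) → Prop) (x : V) :
    (∀ ω : V → Bool,
      (φ (Function.update ω x true) ∧ φ (Function.update ω x false)) ↔
        forallLit (forallLit φ x false) x true ω) ∧
    (∀ ω : V → Bool,
      (φ (Function.update ω x true) ∧ φ (Function.update ω x false)) ↔
        forallLit (forallLit φ x true) x false ω) :=
  ⟨fun ω => ((forallLit_forallLit_not φ x false ω).trans And.comm).symm,
    fun ω => (forallLit_forallLit_not φ x true ω).symm⟩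
end

section
/- Let φ be a formula, ℓ₁,…,ℓₙ literals, ω a world, and α = ω ∩ {¬ℓ₁,…,¬ℓₙ}. Then ω satisfies ∀ℓ₁,…,ℓₙ·φ if and only if ω is an α-independent model of φ, i.e., α ⊆ ω and ω \ α (viewed as a term) entails φ. -/
variable {V : Type*} [Fintype V] [DecidableEq V]

/-! Quantifying `∀ℓ` over `ℓ = (x, b)` lets `x` take either value when `ω` contains `¬ℓ` and
keeps `ω x` otherwise. Unfolding `∀ℓ₁,…,ℓₙ` one literal at a time, the worlds reached from `ω`
are exactly those that may differ from `ω` only at variables whose `ω`-literal is some `¬ℓᵢ`. -/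

section

variable {α : Type*} [DecidableEq α]

/-- `ω'` is a completion of the term `ω \ {ℓ ∈ ω | ¬ℓ ∈ L}`. -/
def AgreesOffNegated (L : List (α × Bool)) (ω ω' : α → Bool) : Prop :=
  ∀ y : α, (y, !(ω y)) ∉ L → ω' y = ω y

theorem forallLit_iff_forall_update {ψ : (α → Bool) → Prop} {x : α} {b : Bool} {ω : α → Bool} :
    forallLit ψ x b ω ↔ ∀ c : Bool, (ω x = !b ∨ c = ω x) → ψ (Function.update ω x c) := by
  rcases Bool.eq_or_eq_not b (ω x) with rfl | rfl
  · simp [forallLit]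
  · simp only [Bool.not_not, true_or, forall_const]
    rw [Bool.forall_bool' (ω x)]
    simp [forallLit]

theorem agreesOffNegated_cons_iff {L : List (α × Bool)} {x : α} {b : Bool} {ω ω' : α → Bool} :
    AgreesOffNegated ((x, b) :: L) ω ω' ↔
      ∃ c : Bool, (ω x = !b ∨ c = ω x) ∧ AgreesOffNegated L (Function.update ω x c) ω' := by
  rcases Bool.eq_or_eq_not b (ω x) with rfl | rfl
  · have hne : ∀ y, (y, !ω y) ≠ (x, ω x) := by
      intro y he
      obtain ⟨rfl, h⟩ := Prod.mk.inj he
      simp at h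
    simp [AgreesOffNegated, hne]
  · simp only [Bool.not_not, true_or, true_and]
    constructor
    · intro h
      refine ⟨ω' x, fun y hy => ?_⟩
      rcases eq_or_ne y x with rfl | hyx
      · simp
      · rw [Function.update_of_ne hyx] at hy ⊢
        exact h y (List.not_mem_cons_of_ne_of_not_mem (fun he => hyx (congrArg Prod.fst he)) hy)
    · rintro ⟨c, h⟩ y hy
      have hyx : y ≠ x := by rintro rfl; exact hy List.mem_cons_self
      simpa [Function.update_of_ne hyx] using
        h y (by simpa [Function.update_of_ne hyx] using fun h => hy (List.mem_cons_of_mem _ h))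

end

/-- Selection semantics: `ω ⊨ ∀ℓ₁,…,ℓₙ·φ` iff `ω` is an `α`-independent model of `φ`,
where `α = ω ∩ {¬ℓ₁,…,¬ℓₙ}`; i.e. every world agreeing with `ω` on all variables whose
literal in `ω` is not among the `¬ℓᵢ` satisfies `φ`. -/
theorem forallLits_semantics (φ : (V → Bool) → Prop) (L : List (V × Bool)) (ω : V → Bool) :
    forallLits φ L ω ↔
      ∀ ω' : V → Bool, (∀ y : V, (y, !(ω y)) ∉ L → ω' y = ω y) → φ ω' := by
  change _ ↔ ∀ ω', AgreesOffNegated L ω ω' → φ ω'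
  induction L generalizing ω with
  | nil => simp [forallLits, AgreesOffNegated, ← funext_iff]
  | cons p L ih =>
    obtain ⟨x, b⟩ := p
    simp only [forallLits, forallLit_iff_forall_update, ih, agreesOffNegated_cons_iff,
      forall_exists_index, and_imp]
    exact ⟨fun h ω' c hc hω' => h c hc ω' hω', fun h c hc ω' hω' => h ω' c hc hω'⟩
end

section
/- Let ω = α ∪ β be a model of formula φ, where α and β partition the literals of ω. Then ω is an α-independent model of φ if and only if φ has no b-rule whose antecedent contains β (i.e., no rule of the form (β ∪ γ → ℓ)). -/
/-!
The worlds that agree with `ω` off `A` form a subcube in which any two worlds are joined by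
flipping the variables of `A` one at a time. A b-rule `(β, γ → ℓ)` of `φ` is precisely an edge
of this subcube that leaves the models of `φ`. Since `ω` itself is a model, `φ` holds on the
whole subcube iff no such edge exists.
-/

variable {V : Type*} [Fintype V] [DecidableEq V]

theorem flipAt_apply_of_ne {ι : Type*} [DecidableEq ι] (ω : ι → Bool) {x y : ι} (h : y ≠ x) :
    flipAt ω x y = ω y :=
  Function.update_of_ne h _ ω

theorem flipAt_update_of_ne {ι : Type*} [DecidableEq ι] {ω : ι → Bool} {x : ι} {b : Bool}
    (h : ω x ≠ b) : flipAt (Function.update ω x b) x = ω := by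
  funext y
  by_cases hy : y = x
  · subst hy
    cases b <;> simp_all [flipAt]
  · simp [flipAt_apply_of_ne _ hy, hy]

theorem Finset.flipAt_induction {ι : Type*} [DecidableEq ι] {P : (ι → Bool) → Prop}
    {ω : ι → Bool} (s : Finset ι) (hω : P ω)
    (hflip : ∀ ω' x, x ∈ s → (∀ y ∉ s, ω' y = ω y) → P ω' → P (flipAt ω' x)) :
    ∀ ω', (∀ y ∉ s, ω' y = ω y) → P ω' := by
  induction s using Finset.induction_on with
  | empty =>
    intro ω' hω'
    simpa [show ω' = ω from funext fun y => hω' y (Finset.notMem_empty y)] using hω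
  | insert x s _ ih =>
    intro ω' hω'
    set ω'' := Function.update ω' x (ω x)
    have hω'' : ∀ y ∉ s, ω'' y = ω y := by
      intro y hy
      by_cases hyx : y = x
      · simp [ω'', hyx]
      · simpa [ω'', hyx] using hω' y (by simp [hyx, hy])
    have hP : P ω'' := ih (fun ω₁ z hz hω₁ => hflip ω₁ z (Finset.mem_insert_of_mem hz)
      fun y hy => hω₁ y fun hys => hy (Finset.mem_insert_of_mem hys)) ω'' hω''
    by_cases hx : ω' x = ω x
    · simpa [ω'', ← hx] using hP
    · rw [← flipAt_update_of_ne hx]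
      refine hflip ω'' x (Finset.mem_insert_self x s) (fun y hy => hω'' y ?_) hP
      exact fun hys => hy (Finset.mem_insert_of_mem hys)

theorem flipAt_induction {ι : Type*} [Fintype ι] [DecidableEq ι] {P : (ι → Bool) → Prop}
    {ω : ι → Bool} {A : Set ι} (hω : P ω)
    (hflip : ∀ ω' x, x ∈ A → (∀ y ∉ A, ω' y = ω y) → P ω' → P (flipAt ω' x)) :
    ∀ ω', (∀ y ∉ A, ω' y = ω y) → P ω' := by
  intro ω' hω'
  have hsA : ∀ y, ω' y ≠ ω y → y ∈ A := fun y hy => by_contra fun hyA => hy (hω' y hyA)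
  refine Finset.flipAt_induction (Finset.univ.filter fun y => ω' y ≠ ω y) hω
    (fun ω₁ x hx hω₁ => hflip ω₁ x (hsA x (Finset.mem_filter.1 hx).2)
      fun y hyA => hω₁ y fun hy => hyA (hsA y (Finset.mem_filter.1 hy).2)) ω' ?_
  simp

/-- Let `ω ⊨ φ`, with its literals partitioned into `α` (on variables in `A`) and `β`
(on variables outside `A`). Then `ω` is an `α`-independent model of `φ` iff `φ` has no
b-rule whose antecedent contains `β`, i.e. no rule `(β, γ → ℓ)`. -/
theorem alphaIndep_iff_no_brule (φ : (V → Bool) → Prop) (ω : V → Bool) (A : Set V)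
    (hω : φ ω) :
    (∀ ω' : V → Bool, (∀ y : V, y ∉ A → ω' y = ω y) → φ ω') ↔
      ∀ (ω' : V → Bool) (x : V), x ∈ A → (∀ y : V, y ∉ A → ω' y = ω y) →
        ¬ HasBRule φ ω' x := by
  constructor
  · rintro h ω' x hx hω' ⟨-, hflip⟩
    exact hflip <| h _ fun y hy =>
      (flipAt_apply_of_ne ω' fun hyx : y = x => hy (hyx ▸ hx)).trans (hω' y hy)
  · intro h
    exact flipAt_induction hω fun ω' x hx hω' hφ =>
      by_contra fun hflip => h ω' x hx hω' ⟨hφ, hflip⟩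
end

section
/- For formula φ and literal ℓ: every model of φ is a model of ∃ℓ·φ, and a world ω is a model of ∃ℓ·φ but not of φ if and only if ω is a ¬ℓ-boundary model of ¬φ. -/
variable {V : Type*} [Fintype V] [DecidableEq V]

/-- `φ|ℓ` agrees with `φ` on worlds containing `ℓ`, and `φ|¬ℓ` on worlds containing `¬ℓ`. -/
theorem existsLit_iff {α : Type*} [DecidableEq α] {φ : (α → Bool) → Prop} {x : α} {b : Bool}
    {ω : α → Bool} :
    existsLit φ x b ω ↔ φ ω ∨ (ω x = !b ∧ φ (Function.update ω x b)) := by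
  by_cases hb : ω x = b
  · have hupdate : Function.update ω x b = ω := Function.update_eq_self_iff.2 hb.symm
    simp only [existsLit, hupdate, Bool.not_eq_not.2 hb, false_and, or_false]
  · have hnot : ω x = !b := Bool.eq_not.2 hb
    have hupdate : Function.update ω x (!b) = ω := Function.update_eq_self_iff.2 hnot.symm
    simp only [existsLit, hupdate, hnot, true_and, or_comm]

/-- Every model of `φ` is a model of `∃ℓ·φ`; moreover `ω ⊨ ∃ℓ·φ` and `ω ⊭ φ` iff `ω` is a
`¬ℓ`-boundary model of `¬φ` (for `ℓ = (x, b)`). -/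
theorem existsLit_semantics (φ : (V → Bool) → Prop) (x : V) (b : Bool) :
    (∀ ω : V → Bool, φ ω → existsLit φ x b ω) ∧
    (∀ ω : V → Bool, (existsLit φ x b ω ∧ ¬ φ ω) ↔
      (ω x = !b ∧ ¬ φ ω ∧ φ (Function.update ω x b))) := by
  refine ⟨fun ω hω => existsLit_iff.2 (Or.inl hω), fun ω => ?_⟩
  rw [existsLit_iff]
  tauto
end

section
/- Existentially quantifying literal ℓ from φ equals φ disjoined with the antecedents of the b-rules of φ inferring ℓ: ∃ℓ·φ ≡ φ ∨ ⋁_{(α → ℓ) ∈ R(φ)} α. -/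
variable {V : Type*} [Fintype V] [DecidableEq V]

theorem flipAt_update_self (ω : V → Bool) (x : V) (b : Bool) :
    flipAt (Function.update ω x b) x = Function.update ω x (!b) := by
  simp [flipAt]

theorem hasBRule_update_iff (φ : (V → Bool) → Prop) (ω : V → Bool) (x : V) (b : Bool) :
    HasBRule φ (Function.update ω x b) x ↔
      φ (Function.update ω x b) ∧ ¬ φ (Function.update ω x (!b)) := by
  rw [HasBRule, flipAt_update_self]

/-- The only world containing `(x, b)` that agrees with `ω` off `x` is `ω` updated at `x`. -/
theorem exists_hasBRule_agreeing_iff (φ : (V → Bool) → Prop) (ω : V → Bool) (x : V) (b : Bool) :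
    (∃ ω' : V → Bool, ω' x = b ∧ HasBRule φ ω' x ∧ ∀ y : V, y ≠ x → ω y = ω' y) ↔
      HasBRule φ (Function.update ω x b) x := by
  constructor
  · rintro ⟨ω', hx, hrule, hagree⟩
    rwa [← Function.eq_update_iff.2 ⟨hx, fun y hy => (hagree y hy).symm⟩]
  · intro hrule
    exact ⟨_, Function.update_self x b ω, hrule,
      fun y hy => (Function.update_of_ne hy b ω).symm⟩

/-- `∃ℓ·φ ≡ φ ∨ ⋁_{(α → ℓ) ∈ R(φ)} α` for `ℓ = (x, b)`: a world satisfies `∃ℓ·φ` iff it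
satisfies `φ` or the antecedent of some b-rule of `φ` inferring `ℓ`, i.e. it agrees off `x`
with some `ℓ`-boundary model of `φ`. -/
theorem existsLit_syntactic (φ : (V → Bool) → Prop) (x : V) (b : Bool) :
    ∀ ω : V → Bool, existsLit φ x b ω ↔
      (φ ω ∨ ∃ ω' : V → Bool, ω' x = b ∧ HasBRule φ ω' x ∧
        ∀ y : V, y ≠ x → ω y = ω' y) := by
  intro ω
  rw [exists_hasBRule_agreeing_iff, hasBRule_update_iff, existsLit]
  obtain hb | hnb := Bool.eq_or_eq_not (ω x) b
  · have hω : Function.update ω x b = ω := hb ▸ Function.update_eq_self x ω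
    rw [hω, hb, Bool.eq_not_self]
    tauto
  · have hω : Function.update ω x (!b) = ω := hnb ▸ Function.update_eq_self x ω
    rw [hω]
    tauto
end

section
/- For a CNF Δ and literal ℓ: (i) ∀ℓ·Δ is obtained from Δ by removing the literal ¬ℓ from every clause; (ii) if Δ is closed under resolution on the variable of ℓ, then ∃ℓ·Δ is obtained from Δ by removing every clause that contains ℓ. -/
/-!
Both parts are proved clause by clause after a case split on the value of `x` in the world `ω`.
For (i), when `ω` falsifies `ℓ` a clause holds in `ω` and in `ω` with `ℓ` made true exactly when
it holds in `ω` without `¬ℓ`; clauses over distinct variables cannot contain both `ℓ` and `¬ℓ`.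
For (ii), the only hard direction is when `ω` falsifies `ℓ` and neither `ω` nor `ω` with `ℓ` made
true is a model. Then some clause `C₁ ∋ ¬ℓ` fails once `ℓ` is made true and some clause `C₂ ∋ ℓ`
fails in `ω`; all literals of their resolvent on `x` are false in `ω`, so it is not tautological,
hence lies in `Δ`, does not contain `ℓ`, and yet is falsified by `ω`.
-/

variable {V : Type*} [Fintype V] [DecidableEq V]

section CNF

omit [Fintype V]

variable {ω : V → Bool} {x : V} {b : Bool} {C C' : Finset (V × Bool)}

def ClauseSat (C : Finset (V × Bool)) (ω : V → Bool) : Prop :=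
  ∃ p ∈ C, ω p.1 = p.2

def CNFSat (Δ : Finset (Finset (V × Bool))) (ω : V → Bool) : Prop :=
  ∀ C ∈ Δ, ClauseSat C ω

def NoClash (C C' : Finset (V × Bool)) : Prop :=
  ∀ (y : V) (c : Bool), (y, c) ∈ C → (y, !c) ∉ C'

def ClosedUnderResolution (Δ : Finset (Finset (V × Bool))) (x : V) : Prop :=
  ∀ C₁ ∈ Δ, ∀ C₂ ∈ Δ, (x, true) ∈ C₁ → (x, false) ∈ C₂ →
    NoClash (C₁.erase (x, true)) (C₂.erase (x, false)) →
    C₁.erase (x, true) ∪ C₂.erase (x, false) ∈ Δ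

theorem update_apply_fst_eq_snd_iff {p : V × Bool} :
    Function.update ω x b p.1 = p.2 ↔ p = (x, b) ∨ p.1 ≠ x ∧ ω p.1 = p.2 := by
  obtain ⟨y, c⟩ := p
  by_cases hy : y = x
  · subst hy
    simp [eq_comm]
  · simp [hy]

omit [DecidableEq V] in
theorem ClauseSat.mono (hCC' : C ⊆ C') (h : ClauseSat C ω) : ClauseSat C' ω :=
  let ⟨p, hp, hpω⟩ := h
  ⟨p, hCC' hp, hpω⟩

theorem clauseSat_union : ClauseSat (C ∪ C') ω ↔ ClauseSat C ω ∨ ClauseSat C' ω := by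
  simp only [ClauseSat, Finset.mem_union, or_and_right, exists_or]

theorem ClauseSat.erase_of_false {p : V × Bool} (h : ClauseSat C ω) (hp : ω p.1 ≠ p.2) :
    ClauseSat (C.erase p) ω := by
  obtain ⟨q, hq, hqω⟩ := h
  exact ⟨q, Finset.mem_erase.2 ⟨fun hqp => hp (hqp ▸ hqω), hq⟩, hqω⟩

theorem clauseSat_update_of_mem (h : (x, b) ∈ C) : ClauseSat C (Function.update ω x b) :=
  ⟨(x, b), h, by simp⟩

theorem ClauseSat.of_update_of_not_mem (hxb : (x, b) ∉ C)
    (h : ClauseSat C (Function.update ω x b)) : ClauseSat C ω := by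
  obtain ⟨p, hp, hpω⟩ := h
  rcases update_apply_fst_eq_snd_iff.1 hpω with rfl | ⟨-, hpω⟩
  · exact absurd hp hxb
  · exact ⟨p, hp, hpω⟩

theorem ClauseSat.update_of_erase (hωx : ω x = !b) (h : ClauseSat (C.erase (x, !b)) ω) :
    ClauseSat C (Function.update ω x b) := by
  obtain ⟨p, hp, hpω⟩ := h
  obtain ⟨hpx, hp⟩ := Finset.mem_erase.1 hp
  have hp₁ : p.1 ≠ x := fun h => hpx (Prod.ext h (by rw [← hpω, h, hωx]))
  exact ⟨p, hp, update_apply_fst_eq_snd_iff.2 (Or.inr ⟨hp₁, hpω⟩)⟩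

theorem ClauseSat.erase_of_update (hC : Set.InjOn Prod.fst (C : Set (V × Bool)))
    (h : ClauseSat C ω) (h' : ClauseSat C (Function.update ω x b)) :
    ClauseSat (C.erase (x, !b)) ω := by
  obtain ⟨q, hq, hqω⟩ := h'
  rcases update_apply_fst_eq_snd_iff.1 hqω with rfl | ⟨hq₁, hqω⟩
  · obtain ⟨p, hp, hpω⟩ := h
    -- `(x, b)` and `(x, !b)` cannot both lie in the clause `C`
    have hpx : p ≠ (x, !b) := by
      rintro rfl
      simpa using hC hq hp rfl
    exact ⟨p, Finset.mem_erase.2 ⟨hpx, hp⟩, hpω⟩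
  · exact ⟨q, Finset.mem_erase.2 ⟨fun h => hq₁ (congrArg Prod.fst h), hq⟩, hqω⟩

omit [DecidableEq V] in
theorem noClash_of_not_clauseSat (h : ¬ ClauseSat C ω) (h' : ¬ ClauseSat C' ω) :
    NoClash C C' := by
  intro y c hy hy'
  rcases Bool.eq_or_eq_not (ω y) c with hc | hc
  · exact h ⟨(y, c), hy, hc⟩
  · exact h' ⟨(y, !c), hy', hc⟩

omit [DecidableEq V] in
theorem NoClash.symm (h : NoClash C C') : NoClash C' C :=
  fun y c hy hy' => h y (!c) hy' (by simpa using hy)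

theorem ClosedUnderResolution.union_erase_mem {Δ : Finset (Finset (V × Bool))}
    (hΔ : ClosedUnderResolution Δ x) {C₁ C₂ : Finset (V × Bool)} (h₁ : C₁ ∈ Δ) (h₂ : C₂ ∈ Δ)
    (hx₁ : (x, b) ∈ C₁) (hx₂ : (x, !b) ∈ C₂)
    (hclash : NoClash (C₁.erase (x, b)) (C₂.erase (x, !b))) :
    C₁.erase (x, b) ∪ C₂.erase (x, !b) ∈ Δ := by
  cases b
  · rw [Finset.union_comm]
    exact hΔ C₂ h₂ C₁ h₁ hx₂ hx₁ hclash.symm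
  · exact hΔ C₁ h₁ C₂ h₂ hx₁ hx₂ hclash

theorem forallLit_cnfSat_iff {Δ : Finset (Finset (V × Bool))}
    (hΔ : ∀ C ∈ Δ, Set.InjOn Prod.fst (C : Set (V × Bool))) :
    forallLit (CNFSat Δ) x b ω ↔ ∀ C ∈ Δ, ClauseSat (C.erase (x, !b)) ω := by
  rcases Bool.eq_or_eq_not (ω x) b with hωx | hωx
  · have hupd : Function.update ω x b = ω := Function.update_eq_self_iff.2 hωx.symm
    simp only [forallLit, hωx, true_or, true_and, hupd]
    exact forall₂_congr fun _ _ =>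
      ⟨fun h => h.erase_of_false (by simp [hωx]), ClauseSat.mono (Finset.erase_subset _ _)⟩
  · have hupd : Function.update ω x (!b) = ω := Function.update_eq_self_iff.2 hωx.symm
    simp only [forallLit, hωx, Bool.not_eq_eq_eq_not, hupd, Bool.eq_not_self, false_or]
    exact ⟨fun ⟨h, h'⟩ C hC => (h C hC).erase_of_update (hΔ C hC) (h' C hC),
      fun h => ⟨fun C hC => (h C hC).mono (Finset.erase_subset _ _),
        fun C hC => (h C hC).update_of_erase hωx⟩⟩

theorem cnfSat_or_cnfSat_update_of_closedUnderResolution {Δ : Finset (Finset (V × Bool))}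
    (hΔ : ClosedUnderResolution Δ x) (hωx : ω x = !b)
    (h : ∀ C ∈ Δ, (x, b) ∉ C → ClauseSat C ω) :
    CNFSat Δ (Function.update ω x b) ∨ CNFSat Δ ω := by
  refine or_iff_not_imp_left.2 fun hnot C₂ h₂ => by_contra fun hC₂ => ?_
  obtain ⟨C₁, h₁, hC₁⟩ : ∃ C₁ ∈ Δ, ¬ ClauseSat C₁ (Function.update ω x b) := by
    simpa [CNFSat] using hnot
  have hxb₁ : (x, b) ∉ C₁ := fun hxb => hC₁ (clauseSat_update_of_mem hxb)
  have hxb₂ : (x, b) ∈ C₂ := by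
    by_contra hxb
    exact hC₂ (h C₂ h₂ hxb)
  have hE₁ : ¬ ClauseSat (C₁.erase (x, !b)) ω := fun hE => hC₁ (hE.update_of_erase hωx)
  have hE₂ : ¬ ClauseSat (C₂.erase (x, b)) ω := fun hE => hC₂ (hE.mono (Finset.erase_subset _ _))
  have hxnb₁ : (x, !b) ∈ C₁ := by
    by_contra hxnb
    exact hE₁ (by simpa [Finset.erase_eq_of_notMem hxnb] using h C₁ h₁ hxb₁)
  have hR := hΔ.union_erase_mem h₁ h₂ hxnb₁ (by simpa using hxb₂)
    (noClash_of_not_clauseSat hE₁ (by simpa using hE₂))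
  have hxbR : (x, b) ∉ C₁.erase (x, !b) ∪ C₂.erase (x, b) := by
    simp [hxb₁]
  rw [Bool.not_not] at hR
  exact (clauseSat_union.1 (h _ hR hxbR)).elim hE₁ hE₂

theorem existsLit_cnfSat_iff {Δ : Finset (Finset (V × Bool))} (hΔ : ClosedUnderResolution Δ x) :
    existsLit (CNFSat Δ) x b ω ↔ ∀ C ∈ Δ, (x, b) ∉ C → ClauseSat C ω := by
  constructor
  · rintro (h | ⟨hωx, h⟩) C hC hxb
    · exact (h C hC).of_update_of_not_mem hxb
    · rw [Function.update_eq_self_iff.2 hωx.symm] at h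
      exact h C hC
  · intro h
    rcases Bool.eq_or_eq_not (ω x) b with hωx | hωx
    · refine Or.inl fun C hC => ?_
      rw [Function.update_eq_self_iff.2 hωx.symm]
      by_cases hxb : (x, b) ∈ C
      · exact ⟨(x, b), hxb, hωx⟩
      · exact h C hC hxb
    · have hupd : Function.update ω x (!b) = ω := Function.update_eq_self_iff.2 hωx.symm
      rw [existsLit, hupd]
      exact (cnfSat_or_cnfSat_update_of_closedUnderResolution hΔ hωx h).imp_right
        fun h' => ⟨hωx, h'⟩

end CNF

/-- For a CNF `Δ` (a finite set of clauses, each a finite set of literals over distinct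
variables) and literal `ℓ = (x, b)`:
(i) `∀ℓ·Δ` is the CNF obtained by removing `¬ℓ` from every clause;
(ii) if `Δ` is closed under resolution on the variable of `ℓ`, then `∃ℓ·Δ` is the CNF
obtained by removing every clause containing `ℓ`. -/
theorem cnf_lit_quantification (Δ : Finset (Finset (V × Bool)))
    (hclause : ∀ C ∈ Δ, ∀ p ∈ C, ∀ q ∈ C, p.1 = q.1 → p = q)
    (x : V) (b : Bool) :
    (∀ ω : V → Bool,
      forallLit (fun ω => ∀ C ∈ Δ, ∃ p ∈ C, ω p.1 = p.2) x b ω ↔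
        ∀ C ∈ Δ, ∃ p ∈ C.erase (x, !b), ω p.1 = p.2) ∧
    ((∀ C₁ ∈ Δ, ∀ C₂ ∈ Δ, (x, true) ∈ C₁ → (x, false) ∈ C₂ →
        (∀ (y : V) (c : Bool),
          (y, c) ∈ C₁.erase (x, true) → (y, !c) ∉ C₂.erase (x, false)) →
        C₁.erase (x, true) ∪ C₂.erase (x, false) ∈ Δ) →
      ∀ ω : V → Bool,
        existsLit (fun ω => ∀ C ∈ Δ, ∃ p ∈ C, ω p.1 = p.2) x b ω ↔
          ∀ C ∈ Δ, (x, b) ∉ C → ∃ p ∈ C, ω p.1 = p.2) :=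
  ⟨fun _ => forallLit_cnfSat_iff fun C hC p hp q hq => hclause C hC p hp q hq,
    fun hres _ => existsLit_cnfSat_iff hres⟩
end
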